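/- arXiv:0709.3837 — 5 statements merged into one kernel-verified Lean document; each statement's English description precedes it below -/
import Mathlib

section
/- Let a, b be complex numbers with |a|^2 - |b|^2 = 1 and let ξ, ω, ω̃ be real numbers satisfying the two identities |a|·e^{-iξ} = -b·e^{iω̃} + e^{-ω} and |a|·e^{-iξ} = e^{ω} + conj(b)·e^{-iω̃}. Then |a|·cos ξ = cosh ω. -/
open Complex ComplexConjugate

/-- Ercolani–McKean identity: from the two scattering relations and
`|a|² - |b|² = 1` one deduces `|a| cos ξ = cosh ω`. Here `ωt` denotes `ω̃`. -/
theorem stmt0 (a b : ℂ) (ξ ω ωt : ℝ)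
    (hab : ‖a‖ ^ 2 - ‖b‖ ^ 2 = 1)
    (h1 : (‖a‖ : ℂ) * Complex.exp (-(ξ : ℂ) * I)
        = -b * Complex.exp ((ωt : ℂ) * I) + Complex.exp (-(ω : ℂ)))
    (h2 : (‖a‖ : ℂ) * Complex.exp (-(ξ : ℂ) * I)
        = Complex.exp ((ω : ℂ)) + conj b * Complex.exp (-(ωt : ℂ) * I)) :
    ‖a‖ * Real.cos ξ = Real.cosh ω := by
  have H : (2:ℂ) * (‖a‖ : ℂ) * Complex.exp (-(ξ:ℂ)*I)
      = Complex.exp (ω:ℂ) + Complex.exp (-(ω:ℂ))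
        + (conj b * Complex.exp (-(ωt:ℂ)*I) - b * Complex.exp ((ωt:ℂ)*I)) := by
    linear_combination h1 + h2
  have hre := congrArg Complex.re H
  simp [Complex.exp_re, Complex.exp_im, Complex.mul_re, Complex.add_re, Complex.sub_re,
    Complex.neg_re, Complex.neg_im, Complex.mul_im, Real.cosh_eq] at hre
  rw [Real.cosh_eq]
  linarith [hre]
end

section
/- Let Y₀ : ℝ → M₂(ℂ) be the matrix with zero diagonal and off-diagonal entries conj(ψ(x)) (top-right) and ψ(x) (bottom-left), where ψ : ℝ → ℂ. Let T(x,y,λ) solve T' = Y₀(x) E(λx) T, T(y,y,λ) = I, where E(λx) = exp(-iλx σ₃). Then σ₁ T(x, y, conj(λ)) σ₁ = conj(T(x, y, λ)). -/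
open Complex ComplexConjugate Matrix

private lemma const_of_deriv0 (f : ℝ → ℂ) (h : ∀ x, HasDerivAt f 0 x) (x y : ℝ) :
    f x = f y :=
  is_const_of_deriv_eq_zero (fun z => (h z).differentiableAt) (fun z => (h z).deriv) x y

private lemma key (p q : ℝ → ℂ) (A B : ℝ → Matrix (Fin 2) (Fin 2) ℂ) (y : ℝ)
    (hA0 : ∀ x j, HasDerivAt (fun s => A s 0 j) (p x * A x 1 j) x)
    (hA1 : ∀ x j, HasDerivAt (fun s => A s 1 j) (q x * A x 0 j) x)
    (hB0 : ∀ x j, HasDerivAt (fun s => B s 0 j) (p x * B x 1 j) x)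
    (hB1 : ∀ x j, HasDerivAt (fun s => B s 1 j) (q x * B x 0 j) x)
    (hAy : A y = 1) (hBy : B y = 1) : ∀ x, A x = B x := by
  -- determinant of A is constant 1
  have hdet : ∀ x, A x 0 0 * A x 1 1 - A x 0 1 * A x 1 0 = 1 := by
    intro x
    have h := const_of_deriv0 (fun s => A s 0 0 * A s 1 1 - A s 0 1 * A s 1 0) ?_ x y
    · rw [h, hAy]; norm_num
    · intro z
      have := (((hA0 z 0).mul (hA1 z 1)).sub ((hA0 z 1).mul (hA1 z 0)))
      exact this.congr_deriv (by ring)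
  -- F i j := (adj A * B) i j is constant
  have hF00 : ∀ x, A x 1 1 * B x 0 0 - A x 0 1 * B x 1 0 = 1 := by
    intro x
    have h := const_of_deriv0 (fun s => A s 1 1 * B s 0 0 - A s 0 1 * B s 1 0) ?_ x y
    · rw [h, hAy, hBy]; norm_num
    · intro z
      have := (((hA1 z 1).mul (hB0 z 0)).sub ((hA0 z 1).mul (hB1 z 0)))
      exact this.congr_deriv (by ring)
  have hF01 : ∀ x, A x 1 1 * B x 0 1 - A x 0 1 * B x 1 1 = 0 := by
    intro x
    have h := const_of_deriv0 (fun s => A s 1 1 * B s 0 1 - A s 0 1 * B s 1 1) ?_ x y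
    · rw [h, hAy, hBy]; norm_num
    · intro z
      have := (((hA1 z 1).mul (hB0 z 1)).sub ((hA0 z 1).mul (hB1 z 1)))
      exact this.congr_deriv (by ring)
  have hF10 : ∀ x, A x 0 0 * B x 1 0 - A x 1 0 * B x 0 0 = 0 := by
    intro x
    have h := const_of_deriv0 (fun s => A s 0 0 * B s 1 0 - A s 1 0 * B s 0 0) ?_ x y
    · rw [h, hAy, hBy]; norm_num
    · intro z
      have := (((hA0 z 0).mul (hB1 z 0)).sub ((hA1 z 0).mul (hB0 z 0)))
      exact this.congr_deriv (by ring)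
  have hF11 : ∀ x, A x 0 0 * B x 1 1 - A x 1 0 * B x 0 1 = 1 := by
    intro x
    have h := const_of_deriv0 (fun s => A s 0 0 * B s 1 1 - A s 1 0 * B s 0 1) ?_ x y
    · rw [h, hAy, hBy]; norm_num
    · intro z
      have := (((hA0 z 0).mul (hB1 z 1)).sub ((hA1 z 0).mul (hB0 z 1)))
      exact this.congr_deriv (by ring)
  intro x
  ext i j
  fin_cases i <;> fin_cases j <;> simp only [Fin.mk_zero, Fin.mk_one, Fin.isValue]
  · linear_combination B x 0 0 * hdet x - A x 0 0 * hF00 x - A x 0 1 * hF10 x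
  · linear_combination B x 0 1 * hdet x - A x 0 0 * hF01 x - A x 0 1 * hF11 x
  · linear_combination B x 1 0 * hdet x - A x 1 0 * hF00 x - A x 1 1 * hF10 x
  · linear_combination B x 1 1 * hdet x - A x 1 0 * hF01 x - A x 1 1 * hF11 x

/-- The symmetry `σ₁ Y₀ σ₁ = conj Y₀` of the potential matrix is inherited by
the reduced transition matrix: `σ₁ T(x,y,conj λ) σ₁ = conj (T(x,y,λ))`.
Here `E(λx) = exp(-iλx σ₃)` is written explicitly as a diagonal matrix. -/
theorem stmt10 (ψ : ℝ → ℂ) (T : ℝ → ℝ → ℂ → Matrix (Fin 2) (Fin 2) ℂ)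
    (hT : ∀ (l : ℂ) (y x : ℝ) (i j : Fin 2),
      HasDerivAt (fun s => T s y l i j)
        ((!![0, conj (ψ x); ψ x, 0] *
            !![Complex.exp (-(I * l * (x : ℂ))), 0; 0, Complex.exp (I * l * (x : ℂ))] *
            T x y l) i j) x)
    (hinit : ∀ (l : ℂ) (y : ℝ), T y y l = 1) :
    ∀ (x y : ℝ) (l : ℂ),
      !![0, 1; 1, 0] * T x y (conj l) * !![0, 1; 1, 0]
        = (T x y l).map (starRingEnd ℂ) := by
  intro x y l
  -- entrywise form of the ODE
  have hT0 : ∀ (m : ℂ) (x : ℝ) (j : Fin 2),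
      HasDerivAt (fun s => T s y m 0 j)
        (conj (ψ x) * Complex.exp (I * m * x) * T x y m 1 j) x := by
    intro m x j
    convert hT m y x 0 j using 1
    simp [Matrix.mul_apply, Fin.sum_univ_two]
  have hT1 : ∀ (m : ℂ) (x : ℝ) (j : Fin 2),
      HasDerivAt (fun s => T s y m 1 j)
        (ψ x * Complex.exp (-(I * m * x)) * T x y m 0 j) x := by
    intro m x j
    convert hT m y x 1 j using 1
    simp [Matrix.mul_apply, Fin.sum_univ_two]
  set p : ℝ → ℂ := fun s => ψ s * Complex.exp (-(I * (conj l * s))) with hp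
  set q : ℝ → ℂ := fun s => conj (ψ s) * Complex.exp (I * (conj l * s)) with hq
  set A : ℝ → Matrix (Fin 2) (Fin 2) ℂ :=
    fun s i j => T s y (conj l) (![1, 0] i) (![1, 0] j) with hA
  set B : ℝ → Matrix (Fin 2) (Fin 2) ℂ := fun s => (T s y l).map (starRingEnd ℂ) with hB
  have cexp1 : ∀ s : ℝ, conj (Complex.exp (I * (l * s))) = Complex.exp (-(I * (conj l * s))) := by
    intro s
    rw [← Complex.exp_conj]
    congr 1
    simp only [_root_.map_mul, Complex.conj_I, Complex.conj_ofReal]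
    ring
  have cexp2 : ∀ s : ℝ, conj (Complex.exp (-(I * (l * s)))) = Complex.exp (I * (conj l * s)) := by
    intro s
    rw [← Complex.exp_conj]
    congr 1
    simp only [map_neg, _root_.map_mul, Complex.conj_I, Complex.conj_ofReal]
    ring
  have hkey := key p q A B y
    (by
      intro x j
      have := hT1 (conj l) x (![1, 0] j)
      simpa [hA, hp, mul_assoc] using this)
    (by
      intro x j
      have := hT0 (conj l) x (![1, 0] j)
      simpa [hA, hq, mul_assoc] using this)
    (by
      intro x j
      have := (hT0 l x j).star
      simp only [star_mul', RCLike.star_def, Complex.conj_conj] at this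
      simpa [hB, hp, cexp1 x, mul_assoc, Matrix.map_apply] using this)
    (by
      intro x j
      have := (hT1 l x j).star
      simp only [star_mul', RCLike.star_def, Complex.conj_conj] at this
      simpa [hB, hq, cexp2 x, mul_assoc, Matrix.map_apply] using this)
    (by
      ext i j
      fin_cases i <;> fin_cases j <;>
        simp [hA, hinit, Matrix.one_apply])
    (by
      ext i j
      fin_cases i <;> fin_cases j <;>
        simp [hB, hinit, Matrix.one_apply, Matrix.map_apply])
  ext i j
  have h := congrFun (congrFun (hkey x) i) j
  fin_cases i <;> fin_cases j <;>
    simpa [hA, hB, Matrix.mul_apply, Fin.sum_univ_two, Matrix.vecMul, dotProduct,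
      Matrix.vecHead, Matrix.vecTail] using h
end

section
/- Let j₋, j₊ : ℝ → ℂ² satisfy the Dirac system at real λ with |j₋¹(x)|² - |j₋²(x)|² = 1 and |j₊¹(x)|² - |j₊²(x)|² = -1 for all x. Suppose the variation X₁ acts by X₁ j₊ = (i/2)(σ₃ + I) j₊ (i.e. X₁ j₊¹ = i j₊¹, X₁ j₊² = 0) and X₁ j₋¹ = 0, X₁ j₋² = -i j₋². Set 𝔧₋ = j₋¹ + j₋², 𝔧₊ = j₊¹ + j₊², ξ = Im log(𝔧₋ 𝔧₊). Then X₁ ξ = (1/2)(1/|𝔧₋|² - 1/|𝔧₊|²). -/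
open Complex ComplexConjugate

/-- Action of the first NLS flow `X₁` on the divisor coordinate
`ξ = Im log(𝔧₋ 𝔧₊)`: if `X₁ j₊¹ = i j₊¹`, `X₁ j₊² = 0`, `X₁ j₋¹ = 0`,
`X₁ j₋² = -i j₋²`, and `|j₋¹|² - |j₋²|² = 1`, `|j₊¹|² - |j₊²|² = -1`, then
`X₁ ξ = (1/2)(1/|𝔧₋|² - 1/|𝔧₊|²)`. The flow parameter is `t`, and `ξ` is a
differentiable continuous-argument choice of `Im log (𝔧₋ 𝔧₊)`. -/
theorem stmt13 (jm₁ jm₂ jp₁ jp₂ : ℝ → ℂ) (ξ : ℝ → ℝ)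
    (hm1 : ∀ t, HasDerivAt jm₁ 0 t)
    (hm2 : ∀ t, HasDerivAt jm₂ (-I * jm₂ t) t)
    (hp1 : ∀ t, HasDerivAt jp₁ (I * jp₁ t) t)
    (hp2 : ∀ t, HasDerivAt jp₂ 0 t)
    (hnm : ∀ t, ‖jm₁ t‖ ^ 2 - ‖jm₂ t‖ ^ 2 = 1)
    (hnp : ∀ t, ‖jp₁ t‖ ^ 2 - ‖jp₂ t‖ ^ 2 = -1)
    (hm0 : ∀ t, jm₁ t + jm₂ t ≠ 0)
    (hp0 : ∀ t, jp₁ t + jp₂ t ≠ 0)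
    (hξ : ∀ t, (jm₁ t + jm₂ t) * (jp₁ t + jp₂ t)
        = (‖(jm₁ t + jm₂ t) * (jp₁ t + jp₂ t)‖ : ℂ)
            * Complex.exp (I * (ξ t : ℂ)))
    (hξd : Differentiable ℝ ξ) (t : ℝ) :
    deriv ξ t = (1 / 2) * (1 / ‖jm₁ t + jm₂ t‖ ^ 2
      - 1 / ‖jp₁ t + jp₂ t‖ ^ 2) := by
  set f : ℝ → ℂ := fun s => (jm₁ s + jm₂ s) * (jp₁ s + jp₂ s) with hfdef
  have hf0 : ∀ s, f s ≠ 0 := fun s => mul_ne_zero (hm0 s) (hp0 s)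
  set d : ℝ := deriv ξ t with hd
  set f' : ℂ := (-I * jm₂ t) * (jp₁ t + jp₂ t) + (jm₁ t + jm₂ t) * (I * jp₁ t)
    with hf'
  have hfD : HasDerivAt f f' t := by
    have h1 : HasDerivAt (fun s => jm₁ s + jm₂ s) (-I * jm₂ t) t := by
      exact ((hm1 t).add (hm2 t)).congr_deriv (by ring)
    have h2 : HasDerivAt (fun s => jp₁ s + jp₂ s) (I * jp₁ t) t := by
      exact ((hp1 t).add (hp2 t)).congr_deriv (by ring)
    exact h1.mul h2
  set E : ℝ → ℂ := fun s => Complex.exp (-I * (ξ s : ℂ)) with hEdef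
  have hED : HasDerivAt E (E t * (-I * (d : ℂ))) t := by
    have h1 : HasDerivAt (fun s => ((ξ s : ℝ) : ℂ)) ((d : ℝ) : ℂ) t :=
      ((hξd t).hasDerivAt).ofReal_comp
    have h2 : HasDerivAt (fun s => -I * (ξ s : ℂ)) (-I * (d : ℂ)) t :=
      h1.const_mul (-I)
    convert h2.cexp using 1
  have hhD : HasDerivAt (fun s => f s * E s)
      (f' * E t + f t * (E t * (-I * (d : ℂ)))) t := hfD.mul hED
  have hreal : ∀ s, f s * E s = ((‖f s‖ : ℝ) : ℂ) := by
    intro s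
    have h := hξ s
    simp only [hfdef, hEdef]
    conv_lhs => rw [h]
    rw [mul_assoc, ← Complex.exp_add,
      show I * (ξ s : ℂ) + -I * (ξ s : ℂ) = 0 by ring, Complex.exp_zero, mul_one]
  have him0 : ∀ s, (f s * E s).im = 0 := fun s => by rw [hreal s]; simp
  have himD : HasDerivAt (fun s => (f s * E s).im)
      (f' * E t + f t * (E t * (-I * (d : ℂ)))).im t :=
    Complex.imCLM.hasFDerivAt.comp_hasDerivAt t hhD
  have himD0 : (f' * E t + f t * (E t * (-I * (d : ℂ)))).im = 0 := by
    have h0 : HasDerivAt (fun s => (f s * E s).im) 0 t := by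
      rw [funext him0]; exact hasDerivAt_const t 0
    exact himD.unique h0
  set r : ℝ := ‖f t‖ with hr
  have hrpos : 0 < r := norm_pos_iff.mpr (hf0 t)
  have hrne : r ≠ 0 := ne_of_gt hrpos
  have hrne' : ((r : ℝ) : ℂ) ≠ 0 := by exact_mod_cast hrne
  have hft : f t ≠ 0 := hf0 t
  have hfE : f t * E t = ((r : ℝ) : ℂ) := hreal t
  have hcc : f t * (starRingEnd ℂ) (f t) = ((r ^ 2 : ℝ) : ℂ) := by
    rw [Complex.mul_conj]
    norm_cast
    exact (Complex.sq_norm (f t)).symm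
  have hE2 : E t = (starRingEnd ℂ) (f t) / ((r : ℝ) : ℂ) := by
    rw [eq_div_iff hrne']
    have : f t * (E t * ((r : ℝ) : ℂ)) = f t * (starRingEnd ℂ) (f t) := by
      rw [← mul_assoc, hfE, hcc]; try push_cast; try ring
    exact mul_left_cancel₀ hft (by rw [← this]; try ring)
  -- key identity
  have key : d * Complex.normSq (f t) = (f' * (starRingEnd ℂ) (f t)).im := by
    rw [hE2] at himD0
    have expr : f' * ((starRingEnd ℂ) (f t) / ((r : ℝ) : ℂ))
        + f t * ((starRingEnd ℂ) (f t) / ((r : ℝ) : ℂ) * (-I * (d : ℂ)))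
        = (f' * (starRingEnd ℂ) (f t)) / ((r : ℝ) : ℂ)
          + ((r : ℝ) : ℂ) * (-I * (d : ℂ)) := by
      have h2 : f t * ((starRingEnd ℂ) (f t) / ((r : ℝ) : ℂ) * (-I * (d : ℂ)))
          = ((r : ℝ) : ℂ) * (-I * (d : ℂ)) := by
        rw [show f t * ((starRingEnd ℂ) (f t) / ((r : ℝ) : ℂ) * (-I * (d : ℂ)))
            = (f t * (starRingEnd ℂ) (f t)) * (-I * (d : ℂ)) / ((r : ℝ) : ℂ) by ring,
          hcc, show ((r ^ 2 : ℝ) : ℂ) = ((r : ℝ) : ℂ) * ((r : ℝ) : ℂ) by push_cast; ring,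
          mul_assoc]
        exact mul_div_cancel_left₀ _ hrne'
      rw [h2]; ring
    rw [expr] at himD0
    have him : ((f' * (starRingEnd ℂ) (f t)) / ((r : ℝ) : ℂ)
        + ((r : ℝ) : ℂ) * (-I * (d : ℂ))).im
        = (f' * (starRingEnd ℂ) (f t)).im / r - r * d := by
      simp [Complex.add_im, Complex.div_ofReal_im, Complex.mul_im]
      ring
    rw [him] at himD0
    have hns : Complex.normSq (f t) = r ^ 2 := (Complex.sq_norm (f t)).symm
    rw [hns]
    have h3 : (f' * (starRingEnd ℂ) (f t)).im / r = r * d := by linarith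
    have h4 : (f' * (starRingEnd ℂ) (f t)).im = r * d * r := by
      rw [← h3, div_mul_cancel₀ _ hrne]
    rw [h4]; ring
  -- compute the imaginary part via the normalizations
  have hnm' : Complex.normSq (jm₁ t) - Complex.normSq (jm₂ t) = 1 := by
    have := hnm t; rwa [← Complex.sq_norm, ← Complex.sq_norm]
  have hnp' : Complex.normSq (jp₁ t) - Complex.normSq (jp₂ t) = -1 := by
    have := hnp t; rwa [← Complex.sq_norm, ← Complex.sq_norm]
  have hcomp : (f' * (starRingEnd ℂ) (f t)).im
      = (Complex.normSq (jp₁ t + jp₂ t) - Complex.normSq (jm₁ t + jm₂ t)) / 2 := by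
    simp only [hf', hfdef, Complex.normSq_apply, Complex.mul_im, Complex.mul_re,
      Complex.add_re, Complex.add_im, Complex.conj_re, Complex.conj_im,
      Complex.neg_re, Complex.neg_im, Complex.I_re, Complex.I_im]
    simp only [Complex.normSq_apply] at hnm' hnp'
    linear_combination
      ((((jp₁ t).re + (jp₂ t).re) * ((jp₁ t).re + (jp₂ t).re)
        + ((jp₁ t).im + (jp₂ t).im) * ((jp₁ t).im + (jp₂ t).im)) / 2) * hnm'
      + ((((jm₁ t).re + (jm₂ t).re) * ((jm₁ t).re + (jm₂ t).re)
        + ((jm₁ t).im + (jm₂ t).im) * ((jm₁ t).im + (jm₂ t).im)) / 2) * hnp'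
  have hM0 : 0 < Complex.normSq (jm₁ t + jm₂ t) := Complex.normSq_pos.mpr (hm0 t)
  have hP0 : 0 < Complex.normSq (jp₁ t + jp₂ t) := Complex.normSq_pos.mpr (hp0 t)
  have hnsf : Complex.normSq (f t)
      = Complex.normSq (jm₁ t + jm₂ t) * Complex.normSq (jp₁ t + jp₂ t) := by
    simp [hfdef, Complex.normSq_mul]
  rw [hcomp, hnsf] at key
  rw [show ‖jm₁ t + jm₂ t‖ ^ 2 = Complex.normSq (jm₁ t + jm₂ t) from
      Complex.sq_norm _,
    show ‖jp₁ t + jp₂ t‖ ^ 2 = Complex.normSq (jp₁ t + jp₂ t) from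
      Complex.sq_norm _]
  field_simp
  nlinarith [key, hM0, hP0]
end

section
/- Let f, g : [y, ∞) → ℂ² solve the Dirac system at real λ on the upper bank, with a ∈ ℂ, |a| ≥ 1, b ∈ ℂ, |b| < |a|. Suppose Δ : ℝ → ℂ² is square-integrable in λ for each x, satisfies σ₁ conj(Δ(x,λ)) + (b/a) Δ(x,λ) = (1/a) Δ̂(x,λ) where for each fixed x the function λ ↦ Δ^T(x,λ) σ₁ Δ̂(x,λ) extends analytically to the upper half-plane with decay O(|λ|^{-2}). Then ∫ |Δ(x,λ)|² dλ + ∫ (b(λ)/a(λ)) Δ^T(x,λ) σ₁ Δ(x,λ) dλ = 0, and since |b(λ)/a(λ)| < 1 pointwise, it follows that Δ(x, ·) = 0 almost everywhere. -/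
open Complex ComplexConjugate MeasureTheory

open Filter Set intervalIntegral Topology in
/-- Contour estimate: the integral of an analytic-on-UHP function with
`O(|z|⁻²)` decay over `[-R, R]` is bounded by `4C/R`. -/
lemma rect_bound (F : ℂ → ℂ) (C : ℝ)
    (hF : DifferentiableOn ℂ F {z : ℂ | 0 < z.im})
    (hFcont : ContinuousOn F {z : ℂ | 0 ≤ z.im})
    (hFdecay : ∀ z : ℂ, 0 ≤ z.im → 1 ≤ ‖z‖ →
      ‖F z‖ ≤ C / ‖z‖ ^ 2)
    (R : ℝ) (hR : 1 ≤ R) :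
    ‖∫ x in (-R)..R, F x‖ ≤ 4 * C / R := by
  have hR0 : (0 : ℝ) < R := lt_of_lt_of_le one_pos hR
  have hC : 0 ≤ C := by
    have := hFdecay Complex.I (by simp) (by simp)
    have h0 : (0:ℝ) ≤ ‖F Complex.I‖ := norm_nonneg _
    have : (0:ℝ) ≤ C / ‖Complex.I‖ ^ 2 := le_trans h0 this
    simpa using this
  set z : ℂ := ⟨-R, 0⟩ with hz
  set w : ℂ := ⟨R, R⟩ with hw
  have hzre : z.re = -R := rfl
  have hzim : z.im = 0 := rfl
  have hwre : w.re = R := rfl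
  have hwim : w.im = R := rfl
  have hsub : Set.uIcc z.re w.re ×ℂ Set.uIcc z.im w.im ⊆ {z : ℂ | 0 ≤ z.im} := by
    intro ζ hζ
    rw [mem_reProdIm] at hζ
    have := hζ.2
    rw [hzim, hwim, uIcc_of_le (le_of_lt hR0)] at this
    exact this.1
  have hsub2 : Ioo (min z.re w.re) (max z.re w.re) ×ℂ Ioo (min z.im w.im) (max z.im w.im)
      ⊆ {z : ℂ | 0 < z.im} := by
    intro ζ hζ
    rw [mem_reProdIm] at hζ
    have := hζ.2.1
    rw [hzim, hwim] at this
    simpa using lt_of_le_of_lt (le_min (le_refl 0) (le_of_lt hR0)) this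
  have key := Complex.integral_boundary_rect_eq_zero_of_continuousOn_of_differentiableOn F z w
    (hFcont.mono hsub) (hF.mono hsub2)
  rw [hzre, hzim, hwre, hwim] at key
  -- bound the top
  have habs : ∀ ζ : ℂ, 0 ≤ ζ.im → R ≤ ‖ζ‖ →
      ‖F ζ‖ ≤ C / R ^ 2 := by
    intro ζ him hlar
    refine le_trans (hFdecay ζ him (le_trans hR hlar)) ?_
    apply div_le_div_of_nonneg_left hC (by positivity)
    have : (0:ℝ) ≤ ‖ζ‖ := norm_nonneg _
    nlinarith
  have htop : ‖∫ x : ℝ in (-R)..R, F (x + (R:ℝ) * Complex.I)‖ ≤ C / R ^ 2 * |R - (-R)| := by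
    apply intervalIntegral.norm_integral_le_of_norm_le_const
    intro x hx
    apply habs
    · simp [hR0.le]
    · have := Complex.abs_im_le_norm (↑x + (R:ℝ) * Complex.I)
      simpa using le_trans (le_abs_self R) (by simpa using this)
  have hside : ∀ s : ℝ, |s| = R → ‖∫ y : ℝ in (0:ℝ)..R, F ((s:ℝ) + y * Complex.I)‖
      ≤ C / R ^ 2 * |R - 0| := by
    intro s hs
    apply intervalIntegral.norm_integral_le_of_norm_le_const
    intro y hy
    rw [Set.uIoc_of_le (le_of_lt hR0)] at hy
    apply habs
    · simpa using le_of_lt hy.1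
    · have := Complex.abs_re_le_norm ((s:ℝ) + y * Complex.I)
      simpa [hs] using this
  have h1 := hside R (abs_of_pos hR0)
  have h2 := hside (-R) (by rw [abs_neg]; exact abs_of_pos hR0)
  -- assemble
  have hbot : (∫ x : ℝ in (-R)..R, F ((x:ℝ) + (0:ℝ) * Complex.I))
      = ∫ x in (-R)..R, F x := by
    congr 1
    ext x
    norm_num
  rw [hbot] at key
  have hkey : (∫ x in (-R)..R, F x)
      = (∫ x : ℝ in (-R)..R, F ((x:ℝ) + (R:ℝ) * Complex.I))
        - Complex.I • (∫ y : ℝ in (0:ℝ)..R, F ((R:ℝ) + y * Complex.I))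
        + Complex.I • (∫ y : ℝ in (0:ℝ)..R, F ((-R:ℝ) + y * Complex.I)) := by
    push_cast at key ⊢
    linear_combination key
  rw [hkey]
  have hnorm : ∀ v : ℂ, ‖Complex.I • v‖ = ‖v‖ := by
    intro v; rw [smul_eq_mul, norm_mul]; simp
  calc ‖_ - Complex.I • _ + Complex.I • _‖
      ≤ ‖(∫ x : ℝ in (-R)..R, F ((x:ℝ) + (R:ℝ) * Complex.I))
        - Complex.I • (∫ y : ℝ in (0:ℝ)..R, F ((R:ℝ) + y * Complex.I))‖
        + ‖Complex.I • (∫ y : ℝ in (0:ℝ)..R, F ((-R:ℝ) + y * Complex.I))‖ :=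
        norm_add_le _ _
    _ ≤ ‖(∫ x : ℝ in (-R)..R, F ((x:ℝ) + (R:ℝ) * Complex.I))‖
        + ‖Complex.I • (∫ y : ℝ in (0:ℝ)..R, F ((R:ℝ) + y * Complex.I))‖
        + ‖Complex.I • (∫ y : ℝ in (0:ℝ)..R, F ((-R:ℝ) + y * Complex.I))‖ := by
        exact add_le_add_left (norm_sub_le _ _) _
    _ ≤ C / R ^ 2 * |R - (-R)| + C / R ^ 2 * |R - 0| + C / R ^ 2 * |R - 0| := by
        rw [hnorm, hnorm]
        exact add_le_add (add_le_add htop h1) h2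
    _ = 4 * C / R := by
        have e1 : |R - -R| = 2 * R := by
          rw [show R - -R = 2 * R from by ring]
          exact abs_of_pos (by linarith)
        have e2 : |R - 0| = R := by rw [sub_zero, abs_of_pos hR0]
        rw [e1, e2]
        field_simp
        ring

open Filter Set Topology in
/-- Core estimate in the injectivity of the scattering map (Lemma 2.4):
if `σ₁ conj Δ + (b/a) Δ = (1/a) Δ̂` and `λ ↦ (1/a) Δᵀ σ₁ Δ̂` extends
analytically to the upper half-plane with `O(|λ|⁻²)` decay, then
`∫|Δ|² dλ + ∫ (b/a) Δᵀ σ₁ Δ dλ = 0`, and since `|b/a| < 1` pointwise,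
`Δ = 0` almost everywhere.  Here `Δᵀ σ₁ Δ = 2 Δ¹ Δ²`. -/
theorem stmt14 (a b : ℝ → ℂ) (Δ Δh : ℝ → Fin 2 → ℂ)
    (ha : ∀ l, 1 ≤ ‖a l‖)
    (hb : ∀ l, ‖b l‖ < ‖a l‖)
    (hL2 : Integrable (fun l => ‖Δ l 0‖ ^ 2 + ‖Δ l 1‖ ^ 2))
    (hInt : Integrable (fun l => (b l / a l) * (2 * Δ l 0 * Δ l 1)))
    (hrel : ∀ l : ℝ,
      conj (Δ l 1) + (b l / a l) * Δ l 0 = (1 / a l) * Δh l 0 ∧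
      conj (Δ l 0) + (b l / a l) * Δ l 1 = (1 / a l) * Δh l 1)
    (F : ℂ → ℂ) (C : ℝ)
    (hF : DifferentiableOn ℂ F {z : ℂ | 0 < z.im})
    (hFcont : ContinuousOn F {z : ℂ | 0 ≤ z.im})
    (hFb : ∀ l : ℝ, F l = (1 / a l) * (Δ l 0 * Δh l 1 + Δ l 1 * Δh l 0))
    (hFdecay : ∀ z : ℂ, 0 ≤ z.im → 1 ≤ ‖z‖ →
      ‖F z‖ ≤ C / ‖z‖ ^ 2) :
    (∫ l : ℝ, (((‖Δ l 0‖ ^ 2 + ‖Δ l 1‖ ^ 2 : ℝ) : ℂ)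
        + (b l / a l) * (2 * Δ l 0 * Δ l 1))) = 0 ∧
      ∀ᵐ l : ℝ, Δ l = 0 := by
  have ha0 : ∀ l, a l ≠ 0 := by
    intro l h
    have := ha l
    rw [h, norm_zero] at this
    linarith
  -- the integrand equals `F` on the real line
  have hfF : ∀ l : ℝ, (((‖Δ l 0‖ ^ 2 + ‖Δ l 1‖ ^ 2 : ℝ) : ℂ)
      + (b l / a l) * (2 * Δ l 0 * Δ l 1)) = F l := by
    intro l
    rw [hFb l]
    have h1 := (hrel l).1
    have h2 := (hrel l).2
    have e0 : ((‖Δ l 0‖ ^ 2 : ℝ) : ℂ) = Δ l 0 * conj (Δ l 0) := by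
      rw [Complex.mul_conj]
      norm_cast
      rw [Complex.normSq_eq_norm_sq]
    have e1 : ((‖Δ l 1‖ ^ 2 : ℝ) : ℂ) = Δ l 1 * conj (Δ l 1) := by
      rw [Complex.mul_conj]
      norm_cast
      rw [Complex.normSq_eq_norm_sq]
    have : (1 / a l) * (Δ l 0 * Δh l 1 + Δ l 1 * Δh l 0)
        = Δ l 0 * ((1 / a l) * Δh l 1) + Δ l 1 * ((1 / a l) * Δh l 0) := by ring
    rw [this, ← h1, ← h2]
    rw [Complex.ofReal_add, e0, e1]
    ring
  have hfi : Integrable (fun l : ℝ => (((‖Δ l 0‖ ^ 2 + ‖Δ l 1‖ ^ 2 : ℝ) : ℂ)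
      + (b l / a l) * (2 * Δ l 0 * Δ l 1))) := hL2.ofReal.add hInt
  have hFi : Integrable (fun l : ℝ => F (l : ℂ)) := by
    apply hfi.congr
    filter_upwards with l using hfF l
  -- the integral equals zero by contour deformation
  have hI0 : (∫ l : ℝ, F (l : ℂ)) = 0 := by
    have ht1 : Tendsto (fun R : ℝ => ∫ x in (-R)..R, F (x : ℂ)) atTop
        (𝓝 (∫ l : ℝ, F (l : ℂ))) :=
      intervalIntegral_tendsto_integral hFi tendsto_neg_atTop_atBot tendsto_id
    have ht2 : Tendsto (fun R : ℝ => ∫ x in (-R)..R, F (x : ℂ)) atTop (𝓝 0) := by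
      apply squeeze_zero_norm' (a := fun R : ℝ => 4 * C / R)
      · filter_upwards [eventually_ge_atTop (1 : ℝ)] with R hR
        exact rect_bound F C hF hFcont hFdecay R hR
      · exact Tendsto.div_atTop tendsto_const_nhds tendsto_id
    exact tendsto_nhds_unique ht1 ht2
  have hIzero : (∫ l : ℝ, (((‖Δ l 0‖ ^ 2 + ‖Δ l 1‖ ^ 2 : ℝ) : ℂ)
      + (b l / a l) * (2 * Δ l 0 * Δ l 1))) = 0 := by
    rw [← hI0]
    exact integral_congr_ae (Filter.Eventually.of_forall hfF)
  refine ⟨hIzero, ?_⟩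
  -- take real parts
  set g : ℝ → ℝ := fun l => ‖Δ l 0‖ ^ 2 + ‖Δ l 1‖ ^ 2
      + ((b l / a l) * (2 * Δ l 0 * Δ l 1)).re with hg
  have hgre : ∀ l, g l = ((((‖Δ l 0‖ ^ 2 + ‖Δ l 1‖ ^ 2 : ℝ) : ℂ)
      + (b l / a l) * (2 * Δ l 0 * Δ l 1))).re := by
    intro l; simp [hg, ← Complex.ofReal_pow]
  have hgi : Integrable g := by
    apply (hfi.re).congr
    filter_upwards with l using (hgre l).symm
  have hgint : (∫ l : ℝ, g l) = 0 := by
    have h := integral_re hfi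
    simp only [RCLike.re_to_complex] at h
    rw [integral_congr_ae (Filter.Eventually.of_forall hgre), h, hIzero]
    simp
  -- pointwise lower bound on `g`
  have hglb : ∀ l, (‖Δ l 0‖ - ‖Δ l 1‖) ^ 2
      + (1 - ‖b l / a l‖) * (2 * ‖Δ l 0‖ * ‖Δ l 1‖) ≤ g l := by
    intro l
    have hre : -‖(b l / a l) * (2 * Δ l 0 * Δ l 1)‖
        ≤ ((b l / a l) * (2 * Δ l 0 * Δ l 1)).re := (abs_le.1 (Complex.abs_re_le_norm _)).1
    have habs : ‖(b l / a l) * (2 * Δ l 0 * Δ l 1)‖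
        = ‖b l / a l‖ * (2 * ‖Δ l 0‖ * ‖Δ l 1‖) := by
      simp [norm_mul]
    rw [habs] at hre
    simp only [hg]
    nlinarith [hre]
  have hg0 : ∀ l, 0 ≤ g l := by
    intro l
    refine le_trans ?_ (hglb l)
    have hr : ‖b l / a l‖ ≤ 1 := by
      rw [norm_div]
      rw [div_le_one (lt_of_lt_of_le one_pos (ha l))]
      exact le_of_lt (hb l)
    have h0 : (0:ℝ) ≤ ‖Δ l 0‖ := norm_nonneg _
    have h1 : (0:ℝ) ≤ ‖Δ l 1‖ := norm_nonneg _
    have hB : (0:ℝ) ≤ (1 - ‖b l / a l‖) * (2 * ‖Δ l 0‖ * ‖Δ l 1‖) :=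
      mul_nonneg (by linarith) (by positivity)
    linarith [sq_nonneg (‖Δ l 0‖ - ‖Δ l 1‖)]
  have hgzero : ∀ᵐ l : ℝ, g l = 0 := by
    have := (integral_eq_zero_iff_of_nonneg_ae
      (Filter.Eventually.of_forall hg0) hgi).mp hgint
    filter_upwards [this] with l hl using hl
  filter_upwards [hgzero] with l hl
  -- from `g l = 0` deduce `Δ l = 0`
  have hr : ‖b l / a l‖ < 1 := by
    rw [norm_div, div_lt_one (lt_of_lt_of_le one_pos (ha l))]
    exact hb l
  have hlb := hglb l
  rw [hl] at hlb
  have h0 : (0:ℝ) ≤ ‖Δ l 0‖ := norm_nonneg _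
  have h1 : (0:ℝ) ≤ ‖Δ l 1‖ := norm_nonneg _
  have hA : (0:ℝ) ≤ (‖Δ l 0‖ - ‖Δ l 1‖) ^ 2 := sq_nonneg _
  have hB : (0:ℝ) ≤ (1 - ‖b l / a l‖) * (2 * ‖Δ l 0‖ * ‖Δ l 1‖) :=
    mul_nonneg (by linarith) (by positivity)
  have hAz : (‖Δ l 0‖ - ‖Δ l 1‖) ^ 2 = 0 := by linarith
  have hBz : (1 - ‖b l / a l‖) * (2 * ‖Δ l 0‖ * ‖Δ l 1‖) = 0 := by linarith
  have heq : ‖Δ l 0‖ = ‖Δ l 1‖ := by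
    have h : ‖Δ l 0‖ - ‖Δ l 1‖ = 0 := by
      have := sq_eq_zero_iff.mp hAz
      exact this
    linarith
  have hm : ‖Δ l 0‖ * ‖Δ l 1‖ = 0 := by
    rcases mul_eq_zero.1 hBz with h | h
    · linarith
    · rcases mul_eq_zero.1 h with h' | h'
      · rcases mul_eq_zero.1 h' with h'' | h''
        · norm_num at h''
        · rw [h'']; ring
      · rw [h']; ring
  have hn0 : ‖Δ l 0‖ = 0 ∧ ‖Δ l 1‖ = 0 := by
    rw [← heq] at hm
    have hu := mul_self_eq_zero.mp hm
    exact ⟨hu, heq ▸ hu⟩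
  funext i
  fin_cases i
  · simpa using norm_eq_zero.mp hn0.1
  · simpa using norm_eq_zero.mp hn0.2
end

section
/- Let a : {Im λ ≥ 0} → ℂ be continuous, analytic in the open upper half-plane, zero-free, with a(λ) → 1 as |λ| → ∞ and |a(λ)| ≥ 1 for real λ. Then there exists a continuous function p : {Im λ ≥ 0} → ℂ, analytic in the open upper half-plane, with a(λ) = exp(-2i p(λ)), p(λ) → 0 as |λ| → ∞, and Im p(λ) ≥ 0 for Im λ ≥ 0. -/
open Complex Filter Set

private lemma stmt16_ev_iff {q : ℂ → Prop} :
    (∀ᶠ z in comap (fun z : ℂ => ‖z‖) atTop ⊓ Filter.principal {z : ℂ | 0 ≤ z.im}, q z) ↔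
      ∃ R : ℝ, ∀ z : ℂ, R ≤ ‖z‖ → 0 ≤ z.im → q z := by
  rw [eventually_inf_principal]
  constructor
  · intro h
    rw [eventually_comap, eventually_atTop] at h
    obtain ⟨R, hR⟩ := h
    exact ⟨R, fun z hz him => hR (‖z‖) hz z rfl him⟩
  · rintro ⟨R, hR⟩
    rw [eventually_comap, eventually_atTop]
    exact ⟨R, fun r hr z hz him => hR z (hz ▸ hr) him⟩

private lemma stmt16_abs_le_abs_add (z : ℂ) (t : ℝ) (hz : 0 ≤ z.im) (ht : 0 ≤ t) :
    ‖z‖ ≤ ‖z + t * I‖ := by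
  rw [Complex.norm_def, Complex.norm_def]
  apply Real.sqrt_le_sqrt
  simp only [Complex.normSq_apply, Complex.add_re, Complex.add_im, Complex.mul_re,
    Complex.mul_im, Complex.I_re, Complex.I_im, Complex.ofReal_re, Complex.ofReal_im]
  nlinarith

private lemma stmt16_im_add (z : ℂ) (t : ℝ) : (z + (t : ℂ) * I).im = z.im + t := by
  simp

private lemma stmt16_shift_tendsto (t : ℝ) (ht : 0 ≤ t) :
    Tendsto (fun z : ℂ => z + t * I)
      (comap (fun z : ℂ => ‖z‖) atTop ⊓ Filter.principal {z : ℂ | 0 ≤ z.im})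
      (comap (fun z : ℂ => ‖z‖) atTop ⊓ Filter.principal {z : ℂ | 0 ≤ z.im}) := by
  have hH : ∀ᶠ z : ℂ in comap (fun z : ℂ => ‖z‖) atTop ⊓ Filter.principal {z : ℂ | 0 ≤ z.im},
      0 ≤ z.im := eventually_inf_principal.mpr (Eventually.of_forall fun z hz => hz)
  refine tendsto_inf.mpr ⟨?_, ?_⟩
  · rw [tendsto_comap_iff]
    refine tendsto_atTop_mono' _ ?_ (tendsto_comap.mono_left inf_le_left)
    filter_upwards [hH] with z hz
    exact stmt16_abs_le_abs_add z t hz ht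
  · rw [tendsto_principal]
    filter_upwards [hH] with z hz
    show 0 ≤ (z + (t : ℂ) * I).im
    rw [stmt16_im_add]
    linarith

private lemma stmt16_near_one_slit {u : ℂ} (h : ‖u - 1‖ < 1) :
    u ∈ Complex.slitPlane := by
  rw [Complex.mem_slitPlane_iff]
  left
  have h1 : |u.re - 1| ≤ ‖u - 1‖ := by
    have := Complex.abs_re_le_norm (u - 1)
    rwa [Complex.sub_re, Complex.one_re] at this
  have h2 := abs_lt.mp (lt_of_le_of_lt h1 h)
  linarith [h2.1]

private lemma stmt16_ratio_slit {u v : ℂ} (hu : ‖u - 1‖ < 1/4)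
    (hv : ‖v - 1‖ < 1/4) : u / v ∈ Complex.slitPlane := by
  have hure : |u.re - 1| < 1/4 := by
    have := (Complex.abs_re_le_norm (u - 1)).trans_lt hu
    rwa [Complex.sub_re, Complex.one_re] at this
  have huim : |u.im| < 1/4 := by
    have := (Complex.abs_im_le_norm (u - 1)).trans_lt hu
    rwa [Complex.sub_im, Complex.one_im, sub_zero] at this
  have hvre : |v.re - 1| < 1/4 := by
    have := (Complex.abs_re_le_norm (v - 1)).trans_lt hv
    rwa [Complex.sub_re, Complex.one_re] at this
  have hvim : |v.im| < 1/4 := by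
    have := (Complex.abs_im_le_norm (v - 1)).trans_lt hv
    rwa [Complex.sub_im, Complex.one_im, sub_zero] at this
  obtain ⟨h1, h2⟩ := abs_lt.mp hure
  obtain ⟨h3, h4⟩ := abs_lt.mp huim
  obtain ⟨h5, h6⟩ := abs_lt.mp hvre
  obtain ⟨h7, h8⟩ := abs_lt.mp hvim
  rw [Complex.mem_slitPlane_iff]
  left
  rw [Complex.div_re, ← add_div]
  apply div_pos _ (by rw [Complex.normSq_apply]; nlinarith)
  nlinarith

private lemma stmt16_abs_ge_one (a : ℂ → ℂ)
    (hacont : ContinuousOn a {z : ℂ | 0 ≤ z.im})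
    (haan : DifferentiableOn ℂ a {z : ℂ | 0 < z.im})
    (hanz : ∀ z : ℂ, 0 ≤ z.im → a z ≠ 0)
    (halim : Tendsto a (comap (fun z : ℂ => ‖z‖) atTop ⊓ Filter.principal {z : ℂ | 0 ≤ z.im})
      (nhds 1))
    (hage : ∀ x : ℝ, 1 ≤ ‖a x‖) :
    ∀ z : ℂ, 0 ≤ z.im → 1 ≤ ‖a z‖ := by
  intro z hz
  have hne : a z ≠ 0 := hanz z hz
  have key : ∀ ε : ℝ, 0 < ε → ‖(a z)⁻¹‖ ≤ 1 + ε := by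
    intro ε hε
    have hδ : (0:ℝ) < ε / (1 + ε) := div_pos hε (by linarith)
    have hball := halim (Metric.ball_mem_nhds (1:ℂ) hδ)
    obtain ⟨R, hR⟩ := stmt16_ev_iff.mp hball
    set R' : ℝ := max R (‖z‖ + 2) with hR'def
    have hzR' : ‖z‖ + 2 ≤ R' := le_max_right _ _
    have hinv : ∀ w : ℂ, 0 ≤ w.im → R' ≤ ‖w‖ → ‖(a w)⁻¹‖ ≤ 1 + ε := by
      intro w him hw
      have hmem := hR w (le_trans (le_max_left _ _) hw) him
      rw [Metric.mem_ball, Complex.dist_eq] at hmem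
      have h2 : ‖(1:ℂ)‖ - ‖a w‖ ≤ ‖(1:ℂ) - a w‖ := norm_sub_norm_le _ _
      rw [norm_sub_rev] at h2
      simp only [norm_one] at h2
      have heq : 1 - ε/(1+ε) = 1/(1+ε) := by field_simp; ring
      have h4 : 1/(1+ε) ≤ ‖a w‖ := by
        rw [← heq]; linarith
      have h5 : 0 < ‖a w‖ := lt_of_lt_of_le (by positivity) h4
      rw [norm_inv]
      rw [inv_le_iff_one_le_mul₀ h5]
      calc (1:ℝ) = (1 + ε) * (1/(1+ε)) := by field_simp
        _ ≤ (1 + ε) * ‖a w‖ := by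
            apply mul_le_mul_of_nonneg_left h4 (by linarith)
    set U : Set ℂ := Metric.ball (0:ℂ) R' ∩ {w : ℂ | 0 < w.im} with hUdef
    have hUopen : IsOpen U := Metric.isOpen_ball.inter (isOpen_lt continuous_const Complex.continuous_im)
    have hclH : closure U ⊆ {w : ℂ | 0 ≤ w.im} := by
      apply closure_minimal _ (isClosed_le continuous_const Complex.continuous_im)
      intro w hw
      have h2 : 0 < w.im := hw.2
      show (0:ℝ) ≤ w.im
      linarith
    have hbd : Bornology.IsBounded U := Metric.isBounded_ball.subset inter_subset_left
    have hdc : DiffContOnCl ℂ (fun w => (a w)⁻¹) U := by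
      constructor
      · exact (haan.mono (fun w hw => hw.2)).inv (fun w hw => hanz w (le_of_lt hw.2))
      · exact (hacont.mono hclH).inv₀ (fun w hw => hanz w (hclH hw))
    have hfr : ∀ w ∈ frontier U, ‖(a w)⁻¹‖ ≤ 1 + ε := by
      intro w hw
      rw [hUopen.frontier_eq] at hw
      obtain ⟨hwc, hwn⟩ := hw
      have him : 0 ≤ w.im := hclH hwc
      by_cases hb : ‖w‖ < R'
      · have him0 : w.im = 0 := by
          by_contra h0
          exact hwn ⟨by rwa [Metric.mem_ball, Complex.dist_eq, sub_zero],
            lt_of_le_of_ne him (Ne.symm h0)⟩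
        have hwre : w = (w.re : ℂ) := Complex.ext rfl (by simp [him0])
        have hge1 : 1 ≤ ‖a w‖ := by
          rw [hwre]; exact hage w.re
        rw [norm_inv]
        have h5 : 0 < ‖a w‖ := lt_of_lt_of_le one_pos hge1
        calc (‖a w‖)⁻¹ ≤ 1 := by
              rw [inv_le_one_iff₀]; right; exact hge1
          _ ≤ 1 + ε := by linarith
      · push_neg at hb
        exact hinv w him hb
    have hzcl : z ∈ closure U := by
      rcases lt_or_eq_of_le hz with h | h
      · apply subset_closure
        refine ⟨?_, h⟩
        rw [Metric.mem_ball, Complex.dist_eq, sub_zero]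
        linarith
      · have hcl0 : (0:ℝ) ∈ closure (Ioo (0:ℝ) 1) := by
          rw [closure_Ioo (by norm_num : (0:ℝ) ≠ 1)]
          exact ⟨le_refl 0, by norm_num⟩
        haveI hnb : (nhdsWithin (0:ℝ) (Ioo 0 1)).NeBot :=
          mem_closure_iff_nhdsWithin_neBot.mp hcl0
        have htd : Tendsto (fun t : ℝ => z + (t:ℂ) * I) (nhdsWithin 0 (Ioo 0 1)) (nhds z) := by
          have hc : Continuous (fun t : ℝ => z + (t:ℂ) * I) := by
            fun_prop
          have := hc.tendsto (0:ℝ)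
          simp only [Complex.ofReal_zero, zero_mul, add_zero] at this
          exact this.mono_left nhdsWithin_le_nhds
        apply mem_closure_of_tendsto htd
        filter_upwards [self_mem_nhdsWithin] with t ht
        obtain ⟨ht0, ht1⟩ := ht
        refine ⟨?_, ?_⟩
        · rw [Metric.mem_ball, Complex.dist_eq, sub_zero]
          calc ‖z + (t:ℂ) * I‖ ≤ ‖z‖ + ‖(t:ℂ) * I‖ :=
                norm_add_le _ _
            _ = ‖z‖ + |t| := by rw [norm_mul, Complex.norm_I, mul_one, Complex.norm_real, Real.norm_eq_abs]
            _ < ‖z‖ + 2 := by rw [abs_of_pos ht0]; linarith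
            _ ≤ R' := hzR'
        · show 0 < (z + (t:ℂ) * I).im
          rw [stmt16_im_add, ← h]
          linarith
    have := Complex.norm_le_of_forall_mem_frontier_norm_le hbd hdc hfr hzcl
    exact this
  have h1 : ‖(a z)⁻¹‖ ≤ 1 := le_of_forall_pos_le_add key
  rw [norm_inv] at h1
  have h0 : 0 < ‖a z‖ := norm_pos_iff.mpr hne
  nlinarith [inv_mul_cancel₀ (ne_of_gt h0), mul_le_mul_of_nonneg_right h1 (le_of_lt h0)]

/-- Existence of the quasimomentum-type logarithm `p` with
`a(λ) = exp(-2i p(λ))`, `p → 0` at infinity, `Im p ≥ 0` in the closed upper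
half-plane, for a zero-free `a` analytic in the upper half-plane, continuous
up to the boundary, tending to `1` at infinity, with `|a| ≥ 1` on the real line. -/
theorem stmt16 (a : ℂ → ℂ)
    (hacont : ContinuousOn a {z : ℂ | 0 ≤ z.im})
    (haan : DifferentiableOn ℂ a {z : ℂ | 0 < z.im})
    (hanz : ∀ z : ℂ, 0 ≤ z.im → a z ≠ 0)
    (halim : Tendsto a (comap (fun z : ℂ => ‖z‖) atTop ⊓ Filter.principal {z : ℂ | 0 ≤ z.im})
      (nhds 1))
    (hage : ∀ x : ℝ, 1 ≤ ‖a x‖) :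
    ∃ p : ℂ → ℂ,
      ContinuousOn p {z : ℂ | 0 ≤ z.im} ∧
      DifferentiableOn ℂ p {z : ℂ | 0 < z.im} ∧
      (∀ z : ℂ, 0 ≤ z.im → a z = Complex.exp (-2 * I * p z)) ∧
      Tendsto p (comap (fun z : ℂ => ‖z‖) atTop ⊓ Filter.principal {z : ℂ | 0 ≤ z.im})
        (nhds 0) ∧
      (∀ z : ℂ, 0 ≤ z.im → 0 ≤ (p z).im) := by
  classical
  obtain ⟨R₀, hR₀⟩ := stmt16_ev_iff.mp
    (halim (Metric.ball_mem_nhds (1:ℂ) (by norm_num : (0:ℝ) < 1/4)))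
  set R : ℝ := max R₀ 1 with hRdef
  have hR1 : (1:ℝ) ≤ R := le_max_right _ _
  have hRpos : (0:ℝ) < R := by linarith
  have hRball : ∀ w : ℂ, R ≤ ‖w‖ → 0 ≤ w.im → ‖a w - 1‖ < 1/4 := by
    intro w hw him
    have := hR₀ w (le_trans (le_max_left _ _) hw) him
    rwa [Metric.mem_ball, Complex.dist_eq] at this
  -- compact region and minimum modulus
  set K : Set ℂ := Metric.closedBall 0 (3*R) ∩ {w : ℂ | 0 ≤ w.im} with hKdef
  have hKsub : K ⊆ {w : ℂ | 0 ≤ w.im} := inter_subset_right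
  have hK : IsCompact K := (isCompact_closedBall _ _).inter_right
    (isClosed_le continuous_const Complex.continuous_im)
  have hKne : K.Nonempty := by
    refine ⟨0, ⟨?_, by simp⟩⟩
    rw [Metric.mem_closedBall, dist_self]
    positivity
  obtain ⟨w₀, hw₀K, hw₀⟩ := hK.exists_isMinOn hKne
    (continuous_norm.comp_continuousOn (hacont.mono hKsub))
  set m : ℝ := ‖a w₀‖ with hmdef
  have hmpos : 0 < m := norm_pos_iff.mpr (hanz w₀ hw₀K.2)
  have hmin : ∀ w ∈ K, m ≤ ‖a w‖ := fun w hw => hw₀ hw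
  -- uniform continuity on K
  have huc := hK.uniformContinuousOn_of_continuous (hacont.mono hKsub)
  rw [Metric.uniformContinuousOn_iff] at huc
  obtain ⟨δ, hδpos, hδ⟩ := huc m hmpos
  -- partition size
  obtain ⟨n, hn⟩ := exists_nat_gt (R / δ)
  have hnpos : (0:ℝ) < n := lt_trans (div_pos hRpos hδpos) hn
  have hnne : (n:ℝ) ≠ 0 := ne_of_gt hnpos
  have hn1 : (1:ℝ) ≤ n := by
    have : 0 < n := by exact_mod_cast hnpos
    exact_mod_cast this
  have hstep : R / n < δ := by
    rw [div_lt_iff₀ hnpos]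
    have := (div_lt_iff₀ hδpos).mp hn
    linarith [this, mul_comm (n:ℝ) δ]
  -- partition
  set c : ℕ → ℝ := fun k => k * R / n with hcdef
  have hc0 : c 0 = 0 := by simp [hcdef]
  have hcnn : ∀ k, 0 ≤ c k := by
    intro k
    have : (0:ℝ) ≤ k := Nat.cast_nonneg k
    positivity
  have hcn : c n = R := by
    simp only [hcdef]
    field_simp
  have hcd : ∀ k, c (k+1) - c k = R / n := by
    intro k
    simp only [hcdef]
    push_cast
    field_simp
    ring
  have himk : ∀ (z : ℂ) (k : ℕ), 0 ≤ z.im → 0 ≤ (z + (c k : ℂ) * I).im := by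
    intro z k hz
    rw [stmt16_im_add]
    linarith [hcnn k]
  have hne : ∀ (z : ℂ) (k : ℕ), 0 ≤ z.im → a (z + (c k : ℂ) * I) ≠ 0 :=
    fun z k hz => hanz _ (himk z k hz)
  -- head is near 1
  have hheadslit : ∀ z : ℂ, 0 ≤ z.im → ‖a (z + (c n : ℂ) * I) - 1‖ < 1/4 := by
    intro z hz
    apply hRball _ _ (himk z n hz)
    refine le_trans ?_ (Complex.abs_im_le_norm _)
    rw [stmt16_im_add, hcn, _root_.abs_of_nonneg (by linarith)]
    linarith
  -- ratios are in the slit plane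
  have hratio : ∀ z : ℂ, 0 ≤ z.im → ∀ k, k < n →
      a (z + (c k : ℂ) * I) / a (z + (c (k+1) : ℂ) * I) ∈ Complex.slitPlane := by
    intro z hz k hk
    set w : ℂ := z + (c k : ℂ) * I with hwdef
    set w' : ℂ := z + (c (k+1) : ℂ) * I with hw'def
    have himw : 0 ≤ w.im := himk z k hz
    have himw' : 0 ≤ w'.im := himk z (k+1) hz
    have hdiff : w - w' = ((c k - c (k+1) : ℝ) : ℂ) * I := by
      rw [hwdef, hw'def]
      push_cast
      ring
    have hdist : ‖w - w'‖ = R / n := by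
      rw [hdiff, norm_mul, Complex.norm_I, mul_one, Complex.norm_real, Real.norm_eq_abs]
      rw [show c k - c (k+1) = -(R/n) by linarith [hcd k], abs_neg,
        _root_.abs_of_nonneg (by positivity)]
    have hstepR : R / n ≤ R := div_le_self (le_of_lt hRpos) hn1
    by_cases hcase : R ≤ ‖w‖ ∧ R ≤ ‖w'‖
    · exact stmt16_ratio_slit (hRball w hcase.1 himw) (hRball w' hcase.2 himw')
    · have htri1 : ‖w‖ ≤ ‖w'‖ + R/n := by
        have h := norm_add_le w' (w - w')
        rw [hdist] at h
        simpa using h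
      have htri2 : ‖w'‖ ≤ ‖w‖ + R/n := by
        have h := norm_add_le w (w' - w)
        have : ‖w' - w‖ = R/n := by
          rw [norm_sub_rev, hdist]
        rw [this] at h
        simpa using h
      have hKmem : w ∈ K ∧ w' ∈ K := by
        have hball : ∀ u : ℂ, 0 ≤ u.im → ‖u‖ ≤ 3*R → u ∈ K := by
          intro u him habs
          refine ⟨?_, him⟩
          rw [Metric.mem_closedBall, Complex.dist_eq, sub_zero]
          exact habs
        rcases not_and_or.mp hcase with h | h
        · push_neg at h
          exact ⟨hball w himw (by linarith), hball w' himw' (by linarith)⟩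
        · push_neg at h
          exact ⟨hball w himw (by linarith), hball w' himw' (by linarith)⟩
      obtain ⟨hwK, hw'K⟩ := hKmem
      have hd2 : dist (a w) (a w') < m := by
        apply hδ w hwK w' hw'K
        rw [Complex.dist_eq, hdist]
        exact hstep
      apply stmt16_near_one_slit
      have hne' : a w' ≠ 0 := hanz _ himw'
      have hrw : a w / a w' - 1 = (a w - a w') / a w' := by
        field_simp
      rw [hrw, norm_div, div_lt_one (norm_pos_iff.mpr hne')]
      calc ‖a w - a w'‖ = dist (a w) (a w') := (Complex.dist_eq _ _).symm
        _ < m := hd2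
        _ ≤ ‖a w'‖ := hmin w' hw'K
  -- the logarithm
  set g : ℂ → ℂ := fun z => Complex.log (a (z + (c n : ℂ) * I)) +
      ∑ k ∈ Finset.range n, Complex.log (a (z + (c k : ℂ) * I) / a (z + (c (k+1) : ℂ) * I))
      with hgdef
  -- exp g = a
  have hexp : ∀ z : ℂ, 0 ≤ z.im → Complex.exp (g z) = a z := by
    intro z hz
    have key : ∀ M : ℕ, Complex.exp (Complex.log (a (z + (c M : ℂ) * I)) +
        ∑ k ∈ Finset.range M,
          Complex.log (a (z + (c k : ℂ) * I) / a (z + (c (k+1) : ℂ) * I))) = a z := by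
      intro M
      induction M with
      | zero =>
        rw [Finset.range_zero, Finset.sum_empty, add_zero, hc0]
        norm_num
        exact Complex.exp_log (hanz z hz)
      | succ M ih =>
        rw [Finset.sum_range_succ]
        set S : ℂ := ∑ k ∈ Finset.range M,
          Complex.log (a (z + (c k : ℂ) * I) / a (z + (c (k+1) : ℂ) * I)) with hSdef
        have h1 : a (z + (c (M+1) : ℂ) * I) ≠ 0 := hne z (M+1) hz
        have h0 : a (z + (c M : ℂ) * I) ≠ 0 := hne z M hz
        calc Complex.exp (Complex.log (a (z + (c (M+1) : ℂ) * I)) +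
              (S + Complex.log (a (z + (c M : ℂ) * I) / a (z + (c (M+1) : ℂ) * I))))
            = Complex.exp (Complex.log (a (z + (c (M+1) : ℂ) * I))) * Complex.exp S *
              Complex.exp (Complex.log (a (z + (c M : ℂ) * I) / a (z + (c (M+1) : ℂ) * I))) := by
              rw [Complex.exp_add, Complex.exp_add]; ring
          _ = a (z + (c (M+1) : ℂ) * I) * Complex.exp S *
              (a (z + (c M : ℂ) * I) / a (z + (c (M+1) : ℂ) * I)) := by
              rw [Complex.exp_log h1, Complex.exp_log (div_ne_zero h0 h1)]
          _ = a (z + (c M : ℂ) * I) * Complex.exp S := by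
              field_simp
          _ = Complex.exp (Complex.log (a (z + (c M : ℂ) * I)) + S) := by
              rw [Complex.exp_add, Complex.exp_log h0]
          _ = a z := ih
    exact key n
  -- continuity
  have hcomp_cont : ∀ k : ℕ,
      ContinuousOn (fun z : ℂ => a (z + (c k : ℂ) * I)) {z : ℂ | 0 ≤ z.im} := by
    intro k
    exact hacont.comp ((continuous_id.add continuous_const).continuousOn)
      (fun z hz => himk z k hz)
  have hgcont : ContinuousOn g {z : ℂ | 0 ≤ z.im} := by
    apply ContinuousOn.add
    · intro z hz
      exact ((hcomp_cont n) z hz).clog (stmt16_near_one_slit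
        (lt_trans (hheadslit z hz) (by norm_num)))
    · apply continuousOn_finset_sum
      intro k hk z hz
      exact (((hcomp_cont k) z hz).div ((hcomp_cont (k+1)) z hz)
        (hne z (k+1) hz)).clog (hratio z hz k (Finset.mem_range.mp hk))
  -- differentiability
  have hopen : IsOpen {z : ℂ | 0 < z.im} := isOpen_lt continuous_const Complex.continuous_im
  have hcomp_diff : ∀ (k : ℕ) (z : ℂ), 0 < z.im →
      DifferentiableAt ℂ (fun z : ℂ => a (z + (c k : ℂ) * I)) z := by
    intro k z hz
    have h1 : 0 < (z + (c k : ℂ) * I).im := by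
      rw [stmt16_im_add]
      linarith [hcnn k]
    have ha' : DifferentiableAt ℂ a (z + (c k : ℂ) * I) :=
      haan.differentiableAt (hopen.mem_nhds h1)
    exact ha'.comp z (differentiableAt_id.add (differentiableAt_const _))
  have hgdiff : DifferentiableOn ℂ g {z : ℂ | 0 < z.im} := by
    intro z hz
    have hz0 : (0:ℝ) < z.im := hz
    have hz' : 0 ≤ z.im := le_of_lt hz0
    apply DifferentiableAt.differentiableWithinAt
    apply DifferentiableAt.add
    · exact (hcomp_diff n z hz0).clog (stmt16_near_one_slit
        (lt_trans (hheadslit z hz') (by norm_num)))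
    · apply DifferentiableAt.fun_sum
      intro k hk
      exact ((hcomp_diff k z hz0).div (hcomp_diff (k+1) z hz0)
        (hne z (k+1) hz')).clog (hratio z hz' k (Finset.mem_range.mp hk))
  -- tendsto at infinity
  have hLtend : ∀ k : ℕ, Tendsto (fun z : ℂ => a (z + (c k : ℂ) * I))
      (comap (fun z : ℂ => ‖z‖) atTop ⊓ Filter.principal {z : ℂ | 0 ≤ z.im}) (nhds 1) :=
    fun k => halim.comp (stmt16_shift_tendsto (c k) (hcnn k))
  have hlog1 : Tendsto Complex.log (nhds 1) (nhds 0) := by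
    have h1 : (1:ℂ) ∈ Complex.slitPlane := by
      rw [Complex.mem_slitPlane_iff]
      left
      norm_num
    have := (_root_.continuousAt_clog h1).tendsto
    rwa [Complex.log_one] at this
  have hgtend : Tendsto g
      (comap (fun z : ℂ => ‖z‖) atTop ⊓ Filter.principal {z : ℂ | 0 ≤ z.im}) (nhds 0) := by
    have h1 : Tendsto (fun z : ℂ => Complex.log (a (z + (c n : ℂ) * I)))
        (comap (fun z : ℂ => ‖z‖) atTop ⊓ Filter.principal {z : ℂ | 0 ≤ z.im}) (nhds 0) :=
      hlog1.comp (hLtend n)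
    have h2 : Tendsto (fun z : ℂ => ∑ k ∈ Finset.range n,
        Complex.log (a (z + (c k : ℂ) * I) / a (z + (c (k+1) : ℂ) * I)))
        (comap (fun z : ℂ => ‖z‖) atTop ⊓ Filter.principal {z : ℂ | 0 ≤ z.im}) (nhds 0) := by
      have := tendsto_finset_sum (Finset.range n) (fun k _ => by
        have hr : Tendsto (fun z : ℂ => a (z + (c k : ℂ) * I) / a (z + (c (k+1) : ℂ) * I))
            (comap (fun z : ℂ => ‖z‖) atTop ⊓ Filter.principal {z : ℂ | 0 ≤ z.im}) (nhds 1) := by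
          have h := (hLtend k).div (hLtend (k+1)) one_ne_zero; rw [div_one] at h; exact h
        exact hlog1.comp hr)
      simpa using this
    have := h1.add h2
    simpa using this
  -- |a| ≥ 1 on the closed half-plane
  have hge := stmt16_abs_ge_one a hacont haan hanz halim hage
  -- the quasimomentum
  refine ⟨fun z => I / 2 * g z, ?_, ?_, ?_, ?_, ?_⟩
  · exact continuousOn_const.mul hgcont
  · exact (differentiableOn_const _).mul hgdiff
  · intro z hz
    have hI : -2 * I * (I / 2 * g z) = g z := by
      have h := Complex.I_sq
      linear_combination (-(g z)) * h
    rw [hI, hexp z hz]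
  · have := hgtend.const_mul (I/2)
    simpa using this
  · intro z hz
    have h1 : 0 ≤ (g z).re := by
      have h2 : Real.exp ((g z).re) = ‖a z‖ := by
        rw [← Complex.norm_exp, hexp z hz]
      rw [← Real.one_le_exp_iff, h2]
      exact hge z hz
    have hIre : (I / 2 : ℂ).re = 0 := by
      simp [Complex.div_re, Complex.normSq_apply]
    have hIim : (I / 2 : ℂ).im = 1/2 := by
      simp [Complex.div_im, Complex.normSq_apply]
    have him : (I / 2 * g z).im = (g z).re / 2 := by
      rw [Complex.mul_im, hIre, hIim]
      ring
    rw [him]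
    linarith
end
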